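/- Let w be a weight (positive a.e. and locally integrable), let f be a measurable function, let 𝐏 be a collection of bitiles, and let 1 < p < ∞. Then the two quantities sup_T w(I_T)^{−1/p} ‖S_T f‖_{L^p(w)} and sup_T w(I_T)^{−1} ‖S_T f‖_{L^{1,∞}(w)}, where both suprema are over all 2-overlapping trees T ⊆ 𝐏, are comparable up to multiplicative constants depending only on p. -/

import Mathlib

open MeasureTheory Set
open scoped ENNReal NNReal Classical

noncomputable section
namespace Paper

/-- The Walsh functions `W_k`, supported on `[0,1)`. -/
def walsh (k : ℕ) (x : ℝ) : ℝ :=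
  if h : k = 0 then (if 0 ≤ x ∧ x < 1 then (1:ℝ) else 0)
  else walsh (k / 2) (2 * x) + (if k % 2 = 0 then (1:ℝ) else -1) * walsh (k / 2) (2 * x - 1)
termination_by k
decreasing_by all_goals exact Nat.div_lt_self (Nat.pos_of_ne_zero h) one_lt_two

/-- The dyadic interval `[2^j m, 2^j (m+1))`. -/
def dyadicI (j m : ℤ) : Set ℝ := Ico ((2:ℝ)^j * (m:ℝ)) ((2:ℝ)^j * ((m:ℝ)+1))

/-- A weight: positive a.e. and locally integrable. -/
def IsWeight (w : ℝ → ℝ) : Prop :=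
  (∀ᵐ x ∂(volume : Measure ℝ), 0 < w x) ∧ LocallyIntegrable w volume

/-- The measure `w(x) dx`. -/
def wMeasure (w : ℝ → ℝ) : Measure ℝ := volume.withDensity fun x => ENNReal.ofReal (w x)

/-- `[w]_{A_p} ≤ A` over dyadic intervals, for `1 < p`. -/
def ApBoundedBy (w : ℝ → ℝ) (p A : ℝ) : Prop :=
  ∀ j m : ℤ,
    ((2:ℝ)^(-j) * ∫ x in dyadicI j m, w x) *
      ((2:ℝ)^(-j) * ∫ x in dyadicI j m, w x ^ (-1/(p-1)))^(p-1) ≤ A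

/-- `[w]_{A_1} ≤ A` over dyadic intervals. -/
def A1BoundedBy (w : ℝ → ℝ) (A : ℝ) : Prop :=
  ∀ j m : ℤ,
    (2:ℝ)^(-j) * ∫ x in dyadicI j m, w x ≤ A * essInf w (volume.restrict (dyadicI j m))

/-- `w ∈ A_q` for `q ∈ [1,∞)`, covering also the case `q = 1`. -/
def MemAq (w : ℝ → ℝ) (q : ℝ) : Prop :=
  IsWeight w ∧ ((q = 1 ∧ ∃ A, A1BoundedBy w A) ∨ (1 < q ∧ ∃ A, ApBoundedBy w q A))

/-- `⟨f,g⟩ = ∫_0^1 f g`. -/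
def inner01 (f g : ℝ → ℝ) : ℝ := ∫ x in Ico (0:ℝ) 1, f x * g x

/-- Walsh--Fourier partial sums, `S_n f = 0` for `n < 0`. -/
def walshSum (f : ℝ → ℝ) (n : ℤ) (x : ℝ) : ℝ :=
  if n < 0 then 0
  else ∑ k ∈ Finset.range (n.toNat + 1), inner01 f (walsh k) * walsh k x

/-- Pointwise `r`-variation sup over all finite increasing integer sequences. -/
def varNormE (r : ℝ) (u : ℤ → ℝ) : ℝ≥0∞ :=
  ⨆ (M : ℕ) (N : Fin (M + 1) → ℤ) (_ : StrictMono N),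
    ENNReal.ofReal ((∑ j : Fin M, |u (N j.succ) - u (N j.castSucc)| ^ r) ^ (1 / r))

/-- A tile `[2^j m, 2^j (m+1)) × [2^{-j} n, 2^{-j}(n+1))`. -/
structure Tile where
  j : ℤ
  m : ℕ
  n : ℕ
deriving DecidableEq

namespace Tile
def timeI (p : Tile) : Set ℝ := Ico ((2:ℝ)^p.j * (p.m:ℝ)) ((2:ℝ)^p.j * ((p.m:ℝ)+1))
def freqI (p : Tile) : Set ℝ := Ico ((2:ℝ)^(-p.j) * (p.n:ℝ)) ((2:ℝ)^(-p.j) * ((p.n:ℝ)+1))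
def len (p : Tile) : ℝ := (2:ℝ)^p.j
def rect (p : Tile) : Set (ℝ × ℝ) := p.timeI ×ˢ p.freqI
/-- The order `p < q` on tiles: the tiles intersect and `I_p ⊆ I_q`. -/
def below (p q : Tile) : Prop := (p.rect ∩ q.rect).Nonempty ∧ p.timeI ⊆ q.timeI
/-- The Walsh packet of a tile. -/
def packet (p : Tile) (x : ℝ) : ℝ :=
  (2:ℝ) ^ (-(p.j:ℝ)/2) * walsh p.n ((2:ℝ)^(-p.j) * x - (p.m:ℝ))
end Tile

/-- A bitile `[2^j m, 2^j (m+1)) × [2^{1-j} n, 2^{1-j}(n+1))` (area 2). -/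
structure Bitile where
  j : ℤ
  m : ℕ
  n : ℕ
deriving DecidableEq

namespace Bitile
def timeI (P : Bitile) : Set ℝ := Ico ((2:ℝ)^P.j * (P.m:ℝ)) ((2:ℝ)^P.j * ((P.m:ℝ)+1))
def freqI (P : Bitile) : Set ℝ := Ico ((2:ℝ)^(1-P.j) * (P.n:ℝ)) ((2:ℝ)^(1-P.j) * ((P.n:ℝ)+1))
def len (P : Bitile) : ℝ := (2:ℝ)^P.j
def rect (P : Bitile) : Set (ℝ × ℝ) := P.timeI ×ˢ P.freqI
/-- The order `P < Q` on bitiles. -/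
def below (P Q : Bitile) : Prop := (P.rect ∩ Q.rect).Nonempty ∧ P.timeI ⊆ Q.timeI
/-- The lower tile `P_1`. -/
def lower (P : Bitile) : Tile := ⟨P.j, P.m, 2 * P.n⟩
/-- The upper tile `P_2`. -/
def upper (P : Bitile) : Tile := ⟨P.j, P.m, 2 * P.n + 1⟩
end Bitile

/-- A tree of bitiles with top `P_T`. -/
structure Tree where
  top : Bitile
  elems : Finset Bitile
  below_top : ∀ P ∈ elems, P.below top

/-- A tree is 2-overlapping if `P_2 < (P_T)_2` for all its members. -/
def Tree.TwoOverlapping (T : Tree) : Prop :=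
  ∀ P ∈ T.elems, (Bitile.upper P).below T.top.upper

/-- A tree is 1-overlapping if `P_1 < (P_T)_1` for all its members. -/
def Tree.OneOverlapping (T : Tree) : Prop :=
  ∀ P ∈ T.elems, (Bitile.lower P).below T.top.lower

/-- `⟨f, φ_p⟩`. -/
def pinner (f : ℝ → ℝ) (p : Tile) : ℝ := ∫ y, f y * p.packet y

/-- The tree square function `S_T f`. -/
def treeSq (f : ℝ → ℝ) (T : Tree) (x : ℝ) : ℝ :=
  Real.sqrt (∑ P ∈ T.elems,
    (pinner f P.lower)^2 * Set.indicator P.timeI (fun _ => (1:ℝ)) x / P.len)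

/-- The (weighted) size of a collection of bitiles: the least constant `C` with
`‖S_T f‖_{L²(w)} ≤ C w(I_T)^{1/2}` over all 2-overlapping trees in the collection,
realized as a supremum of ratios. -/
def size (w f : ℝ → ℝ) (Ps : Set Bitile) : ℝ≥0∞ :=
  ⨆ (T : Tree) (_ : (T.elems : Set Bitile) ⊆ Ps ∧ T.TwoOverlapping),
    eLpNorm (treeSq f T) 2 (wMeasure w) / (wMeasure w T.top.timeI) ^ (1/2 : ℝ)

/-- The coefficient `a_P(x)` built from linearizing data. -/
def coefP (M : ℝ → ℕ) (N : ℕ → ℝ → ℤ) (a : ℕ → ℝ → ℝ) (P : Bitile) (x : ℝ) : ℝ :=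
  ∑ j ∈ Finset.Icc 1 (M x),
    if ((N (j-1) x : ℝ)) ∉ P.freqI ∧ ((N j x : ℝ)) ∈ (Bitile.upper P).freqI then a j x else 0

/-- The (weighted) density of a collection of bitiles. -/
def density (w g : ℝ → ℝ) (r' : ℝ) (M : ℝ → ℕ) (N : ℕ → ℝ → ℤ) (a : ℕ → ℝ → ℝ)
    (Ps : Set Bitile) : ℝ≥0∞ :=
  ⨆ (P : Bitile) (_ : P ∈ Ps) (Q : Bitile) (_ : P.below Q),
    (ENNReal.ofReal (∫ x in Q.timeI,
        |g x| ^ r' * (∑ k ∈ Finset.Icc 1 (M x),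
          if ((N k x : ℝ)) ∈ Q.freqI then |a k x| ^ r' else 0) * w x)
      / wMeasure w Q.timeI) ^ (1/r')

/-- The bilinear form `B_Ps(f,g)`. -/
def bform (w f g : ℝ → ℝ) (M : ℝ → ℕ) (N : ℕ → ℝ → ℤ) (a : ℕ → ℝ → ℝ)
    (Ps : Finset Bitile) : ℝ :=
  ∑ P ∈ Ps, pinner f P.lower * ∫ x, P.lower.packet x * coefP M N a P x * g x * w x

/-- The linearized tree operator `C_T f`. -/
def treeOp (f : ℝ → ℝ) (M : ℝ → ℕ) (N : ℕ → ℝ → ℤ) (a : ℕ → ℝ → ℝ) (T : Tree) (x : ℝ) : ℝ :=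
  ∑ P ∈ T.elems, pinner f P.lower * P.lower.packet x * coefP M N a P x

/-- The Haar function of the dyadic interval `[2^j m, 2^j(m+1))`. -/
def haarFn (j m : ℤ) (x : ℝ) : ℝ :=
  if x ∈ Ico ((2:ℝ)^j * (m:ℝ)) ((2:ℝ)^j * ((m:ℝ) + 1/2)) then (2:ℝ) ^ (-(j:ℝ)/2)
  else if x ∈ Ico ((2:ℝ)^j * ((m:ℝ) + 1/2)) ((2:ℝ)^j * ((m:ℝ)+1)) then -(2:ℝ) ^ (-(j:ℝ)/2)
  else 0

/-- The martingale difference projection `Δ_j f` onto Haar functions at scale `2^{1-j}`. -/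
def haarProj (j : ℤ) (f : ℝ → ℝ) (x : ℝ) : ℝ :=
  ∑' m : ℤ, (∫ y, f y * haarFn (1-j) m y) * haarFn (1-j) m x

/-- The pointwise `r`-variation of the Haar martingale of `f`. -/
def varHaar (r : ℝ) (f : ℝ → ℝ) (x : ℝ) : ℝ≥0∞ :=
  ⨆ (M : ℕ) (N : Fin (M + 1) → ℤ) (_ : StrictMono N),
    ENNReal.ofReal ((∑ k : Fin M,
      |∑ j ∈ Finset.Ioc (N k.castSucc) (N k.succ), haarProj j f x| ^ r) ^ (1/r))

/-- The jump counting function `M_λ(x)`. -/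
def jumpCount (f : ℝ → ℝ) (lam : ℝ) (x : ℝ) : ℝ≥0∞ :=
  ⨆ (M : ℕ) (N : Fin (M + 1) → ℤ) (_ : StrictMono N),
    ((Finset.univ.filter (fun k : Fin M =>
      lam < |∑ j ∈ Finset.Ioc (N k.castSucc) (N k.succ), haarProj j f x|)).card : ℝ≥0∞)

/-- The square function of a finite collection of tiles. -/
def tileSq (f : ℝ → ℝ) (Ds : Finset Tile) (x : ℝ) : ℝ :=
  Real.sqrt (∑ p ∈ Ds, (pinner f p)^2 * Set.indicator p.timeI (fun _ => (1:ℝ)) x / p.len)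

/-- The dyadic sharp maximal function. -/
def sharpMax (g : ℝ → ℝ) (x : ℝ) : ℝ≥0∞ :=
  ⨆ (j : ℤ) (m : ℤ) (_ : x ∈ dyadicI j m),
    ⨅ c : ℝ, ENNReal.ofReal ((2:ℝ)^(-j) * ∫ y in dyadicI j m, |g y - c|)

/-- The dyadic `L²` maximal function `M_2`. -/
def M2fn (f : ℝ → ℝ) (x : ℝ) : ℝ≥0∞ :=
  ⨆ (j : ℤ) (m : ℤ) (_ : x ∈ dyadicI j m),
    ENNReal.ofReal (((2:ℝ)^(-j) * ∫ y in dyadicI j m, (f y)^2) ^ (1/2:ℝ))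

/-- The weak `L^{1,∞}(μ)` quasinorm. -/
def wkNorm (g : ℝ → ℝ) (μ : Measure ℝ) : ℝ≥0∞ :=
  ⨆ lam : ℝ, ENNReal.ofReal lam * μ {x | lam < |g x|}

/-!
The weak-type ratio is controlled by the `L^p` one through Markov's inequality and Hölder's
inequality on `I_T`. The converse is a John–Nirenberg argument. Let `β` bound the weak-type
ratios. One-bitile trees give `|⟨f, φ_{P_1}⟩|² / |I_P| ≤ β²`. Decompose `{S_T f > t}` into maximal
dyadic intervals `J`; for `x ∈ J` and `y` in the parent of `J`, where `S_T f (y) ≤ t`,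
`S_T f (x)² ≤ t² + β² + S_{T_J} f (x)²`, with `T_J` the 2-overlapping tree of the bitiles of `T`
strictly inside `J`. The weak-type bound for `T_J` then gives
`w({S_T f > t + 3β} ∩ J) ≤ w(J) / 2`, hence `w({S_T f > 3βk}) ≤ 2^{-k} w(I_T)`, and summing over
the layers `‖S_T f‖_{L^p(w)}^p ≤ (3β)^p (∑ₖ (k + 1)^p 2^{-k}) w(I_T)`.
-/

lemma mem_dyadicI {j m : ℤ} {x : ℝ} : x ∈ dyadicI j m ↔ ⌊(2:ℝ) ^ (-j) * x⌋ = m := by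
  have h : (0:ℝ) < 2 ^ j := zpow_pos two_pos j
  rw [Int.floor_eq_iff, dyadicI, mem_Ico, zpow_neg, le_inv_mul_iff₀ h, inv_mul_lt_iff₀ h]

lemma floor_zpow_neg_mul_of_le {j j' : ℤ} (h : j ≤ j') (x : ℝ) :
    ⌊(2:ℝ) ^ (-j') * x⌋ = ⌊(2:ℝ) ^ (-j) * x⌋ / 2 ^ (j' - j).toNat := by
  have hx : (2:ℝ) ^ (-j') * x = (2:ℝ) ^ (-j) * x / ((2 ^ (j' - j).toNat : ℕ) : ℝ) := by
    rw [Nat.cast_pow, Nat.cast_ofNat, ← zpow_natCast, Int.toNat_of_nonneg (by omega),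
      div_eq_mul_inv, ← zpow_neg, mul_right_comm, ← zpow_add₀ two_ne_zero]
    ring_nf
  rw [hx, Int.floor_div_natCast]
  push_cast
  rfl

lemma eq_of_mem_dyadicI {j m m' : ℤ} {x : ℝ} (h : x ∈ dyadicI j m) (h' : x ∈ dyadicI j m') :
    m = m' :=
  (mem_dyadicI.1 h).symm.trans (mem_dyadicI.1 h')

lemma dyadicI_subset_of_mem {j j' m m' : ℤ} (hj : j ≤ j') {x : ℝ}
    (hx : x ∈ dyadicI j m) (hx' : x ∈ dyadicI j' m') : dyadicI j m ⊆ dyadicI j' m' := by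
  intro y hy
  rw [mem_dyadicI, floor_zpow_neg_mul_of_le hj] at hx' ⊢
  rw [mem_dyadicI.1 hy, ← mem_dyadicI.1 hx, hx']

lemma dyadicI_subset_parent (j m : ℤ) : dyadicI j m ⊆ dyadicI (j + 1) (m / 2) := by
  intro y hy
  rw [mem_dyadicI, floor_zpow_neg_mul_of_le (by omega : j ≤ j + 1), mem_dyadicI.1 hy]
  simp

lemma dyadicI_nonempty (j m : ℤ) : (dyadicI j m).Nonempty :=
  nonempty_Ico.2 (by have := zpow_pos (two_pos (α := ℝ)) j; nlinarith)

lemma le_of_dyadicI_subset {j j' m m' : ℤ} (h : dyadicI j m ⊆ dyadicI j' m') : j ≤ j' := by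
  have h2 := (Ico_subset_Ico_iff (nonempty_Ico.1 (dyadicI_nonempty j m))).1 h
  have hlen : (2:ℝ) ^ j ≤ 2 ^ j' := by nlinarith [h2.1, h2.2]
  exact (zpow_le_zpow_iff_right₀ one_lt_two).1 hlen

lemma dyadicI_eq_of_subset {j j' m m' : ℤ} (h : dyadicI j m ⊆ dyadicI j' m') (hj : j' ≤ j) :
    dyadicI j m = dyadicI j' m' := by
  obtain rfl : j = j' := (le_of_dyadicI_subset h).antisymm hj
  obtain ⟨x, hx⟩ := dyadicI_nonempty j m
  rw [eq_of_mem_dyadicI hx (h hx)]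

lemma dyadicI_parent_subset_of_lt {j j' m m' : ℤ} (hj : j < j') {x : ℝ}
    (hx : x ∈ dyadicI j m) (hx' : x ∈ dyadicI j' m') : dyadicI (j + 1) (m / 2) ⊆ dyadicI j' m' :=
  dyadicI_subset_of_mem hj (dyadicI_subset_parent j m hx) hx'

lemma index_nonneg_of_mem_dyadicI {j m : ℤ} {x : ℝ} (hx : x ∈ dyadicI j m) (h0 : 0 ≤ x) :
    0 ≤ m :=
  mem_dyadicI.1 hx ▸ Int.floor_nonneg.2 (by positivity)

def maximalDyadic (E : Set ℝ) : Set (ℤ × ℤ) :=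
  {q | dyadicI q.1 q.2 ⊆ E ∧ ¬ dyadicI (q.1 + 1) (q.2 / 2) ⊆ E}

lemma pairwiseDisjoint_maximalDyadic (E : Set ℝ) :
    (maximalDyadic E).PairwiseDisjoint fun q => dyadicI q.1 q.2 := by
  rintro ⟨j, m⟩ ⟨hsub, hpar⟩ ⟨j', m'⟩ ⟨hsub', hpar'⟩ hne
  refine Set.disjoint_left.2 fun x hx hx' => hne ?_
  rcases lt_trichotomy j j' with h | rfl | h
  · exact absurd ((dyadicI_parent_subset_of_lt h hx hx').trans hsub') hpar
  · exact Prod.ext rfl (eq_of_mem_dyadicI hx hx')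
  · exact absurd ((dyadicI_parent_subset_of_lt h hx' hx).trans hsub) hpar'

lemma exists_mem_maximalDyadic {E : Set ℝ} {j₀ m₀ : ℤ} (hE : E ⊆ dyadicI j₀ m₀) {j m : ℤ}
    {x : ℝ} (hx : x ∈ dyadicI j m) (hjm : dyadicI j m ⊆ E) :
    ∃ q ∈ maximalDyadic E, x ∈ dyadicI q.1 q.2 := by
  obtain ⟨j', ⟨m', hx', hsub'⟩, hmax⟩ := Int.exists_greatest_of_bdd
    (P := fun j' => ∃ m', x ∈ dyadicI j' m' ∧ dyadicI j' m' ⊆ E)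
    ⟨j₀, fun _ ⟨_, _, h⟩ => le_of_dyadicI_subset (h.trans hE)⟩ ⟨j, m, hx, hjm⟩
  refine ⟨(j', m'), ⟨hsub', fun hpar => ?_⟩, hx'⟩
  have := hmax (j' + 1) ⟨m' / 2, dyadicI_subset_parent j' m' hx', hpar⟩
  omega

lemma measure_le_half_of_maximalDyadic (μ : Measure ℝ) {E F : Set ℝ}
    (hE : ⋃ q ∈ maximalDyadic E, dyadicI q.1 q.2 = E) (hF : MeasurableSet F) (hFE : F ⊆ E)
    (h : ∀ q ∈ maximalDyadic E, μ (F ∩ dyadicI q.1 q.2) ≤ μ (dyadicI q.1 q.2) / 2) :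
    μ F ≤ μ E / 2 := by
  have hdisj := pairwiseDisjoint_maximalDyadic E
  have hF' : F = ⋃ q ∈ maximalDyadic E, F ∩ dyadicI q.1 q.2 := by
    rw [← inter_iUnion₂, hE, inter_eq_left.2 hFE]
  calc μ F = ∑' q : maximalDyadic E, μ (F ∩ dyadicI q.1.1 q.1.2) := by
        conv_lhs => rw [hF']
        exact measure_biUnion (to_countable _) (hdisj.mono fun q => inter_subset_right)
          fun _ _ => hF.inter measurableSet_Ico
    _ ≤ ∑' q : maximalDyadic E, μ (dyadicI q.1.1 q.1.2) / 2 :=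
        ENNReal.tsum_le_tsum fun q => h q q.2
    _ = μ E / 2 := by
        simp_rw [div_eq_mul_inv]
        rw [ENNReal.tsum_mul_right, ← measure_biUnion (to_countable _) hdisj
          fun _ _ => measurableSet_Ico, hE]

lemma Tile.timeI_eq (p : Tile) : p.timeI = dyadicI p.j p.m := by
  simp [Tile.timeI, dyadicI]

lemma Tile.freqI_eq (p : Tile) : p.freqI = dyadicI (-p.j) p.n := by
  simp [Tile.freqI, dyadicI]

lemma Bitile.timeI_eq (P : Bitile) : P.timeI = dyadicI P.j P.m := by
  simp [Bitile.timeI, dyadicI]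

lemma Bitile.freqI_eq (P : Bitile) : P.freqI = dyadicI (1 - P.j) P.n := by
  simp [Bitile.freqI, dyadicI]

lemma Bitile.nonneg_of_mem_timeI {P : Bitile} {x : ℝ} (hx : x ∈ P.timeI) : 0 ≤ x :=
  le_trans (by positivity) hx.1

lemma Bitile.upper_freqI_subset (P : Bitile) : P.upper.freqI ⊆ P.freqI := by
  have h := dyadicI_subset_parent (-P.j) (2 * P.n + 1)
  rw [show -P.j + 1 = 1 - P.j by ring, show (2 * (P.n : ℤ) + 1) / 2 = P.n by omega] at h
  simpa [Tile.freqI_eq, Bitile.freqI_eq, Bitile.upper] using h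

lemma Tile.below_of_subset {p q : Tile} (ht : p.timeI ⊆ q.timeI) (hf : q.freqI ⊆ p.freqI) :
    p.below q := by
  obtain ⟨t, ht'⟩ : p.timeI.Nonempty := p.timeI_eq ▸ dyadicI_nonempty _ _
  obtain ⟨η, hη⟩ : q.freqI.Nonempty := q.freqI_eq ▸ dyadicI_nonempty _ _
  exact ⟨⟨(t, η), ⟨ht', hf hη⟩, ⟨ht ht', hη⟩⟩, ht⟩

lemma Bitile.below_of_subset {P Q : Bitile} (ht : P.timeI ⊆ Q.timeI) (hf : Q.freqI ⊆ P.freqI) :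
    P.below Q := by
  obtain ⟨t, ht'⟩ : P.timeI.Nonempty := P.timeI_eq ▸ dyadicI_nonempty _ _
  obtain ⟨η, hη⟩ : Q.freqI.Nonempty := Q.freqI_eq ▸ dyadicI_nonempty _ _
  exact ⟨⟨(t, η), ⟨ht', hf hη⟩, ⟨ht ht', hη⟩⟩, ht⟩

lemma Bitile.measure_timeI_ne_top {μ : Measure ℝ} [IsLocallyFiniteMeasure μ] (P : Bitile) :
    μ P.timeI ≠ ⊤ :=
  measure_Ico_lt_top.ne

lemma Bitile.measure_timeI_ne_zero {μ : Measure ℝ} (hμ : volume ≪ μ) (P : Bitile) :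
    μ P.timeI ≠ 0 := fun h => by
  have h' := hμ h
  rw [Bitile.timeI, Real.volume_Ico, ENNReal.ofReal_eq_zero] at h'
  nlinarith [zpow_pos (two_pos (α := ℝ)) P.j]

def Bitile.toTree (P : Bitile) : Tree :=
  ⟨P, {P}, by simpa using Bitile.below_of_subset subset_rfl subset_rfl⟩

lemma Bitile.toTree_twoOverlapping (P : Bitile) : P.toTree.TwoOverlapping := by
  simpa [Tree.TwoOverlapping, Bitile.toTree] using Tile.below_of_subset subset_rfl subset_rfl

lemma Tree.j_le_top (T : Tree) {P : Bitile} (hP : P ∈ T.elems) : P.j ≤ T.top.j := by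
  have h := (T.below_top P hP).2
  rw [Bitile.timeI_eq, Bitile.timeI_eq] at h
  exact le_of_dyadicI_subset h

def Tree.freqPoint (T : Tree) : ℝ := (2:ℝ) ^ (-T.top.upper.j) * T.top.upper.n

/-- In a 2-overlapping tree the dyadic intervals `ω_{P_2}` all meet `ω_{(P_T)_2}` and are at
least as long, so they contain it. -/
lemma Tree.TwoOverlapping.freqPoint_mem {T : Tree} (hT : T.TwoOverlapping) {P : Bitile}
    (hP : P ∈ T.elems) : T.freqPoint ∈ P.upper.freqI := by
  obtain ⟨⟨⟨_, η⟩, ⟨_, hη⟩, ⟨_, hη'⟩⟩, _⟩ := hT P hP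
  rw [Tile.freqI_eq] at hη hη' ⊢
  refine dyadicI_subset_of_mem (neg_le_neg (T.j_le_top hP)) hη' hη ?_
  rw [mem_dyadicI, neg_neg, Tree.freqPoint, ← mul_assoc, ← zpow_add₀ two_ne_zero]
  simp only [Bitile.upper, add_neg_cancel, zpow_zero, one_mul, Int.floor_natCast]

lemma Tree.TwoOverlapping.eq_of_timeI_eq {T : Tree} (hT : T.TwoOverlapping) {P P' : Bitile}
    (hP : P ∈ T.elems) (hP' : P' ∈ T.elems) (h : P.timeI = P'.timeI) : P = P' := by
  rw [Bitile.timeI_eq, Bitile.timeI_eq] at h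
  obtain ⟨j, m, n⟩ := P
  obtain ⟨j', m', n'⟩ := P'
  obtain rfl : j = j' := (le_of_dyadicI_subset h.le).antisymm (le_of_dyadicI_subset h.ge)
  obtain ⟨x, hx⟩ := dyadicI_nonempty j m
  have hm : (m : ℤ) = m' := eq_of_mem_dyadicI hx (h ▸ hx)
  have hn : ((2 * n + 1 : ℕ) : ℤ) = (2 * n' + 1 : ℕ) := by
    have h₁ := hT.freqPoint_mem hP
    have h₂ := hT.freqPoint_mem hP'
    rw [Tile.freqI_eq] at h₁ h₂
    exact eq_of_mem_dyadicI h₁ h₂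
  simp only [Bitile.mk.injEq, true_and]
  omega

lemma Tree.TwoOverlapping.exists_subtree {T : Tree} (hT : T.TwoOverlapping) (j : ℤ) (m : ℕ) :
    ∃ T' : Tree, T'.elems = T.elems.filter (fun P => P.timeI ⊆ dyadicI j m ∧ P.j < j) ∧
      T'.top.timeI = dyadicI j m ∧ T'.TwoOverlapping := by
  set Q : Bitile := ⟨j, m, ⌊(2:ℝ) ^ (j - 1) * T.freqPoint⌋₊⟩
  have hQt : Q.timeI = dyadicI j m := Q.timeI_eq
  have hξ : T.freqPoint ∈ dyadicI (1 - j) Q.n := by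
    rw [mem_dyadicI, neg_sub, Int.natCast_floor_eq_floor (by unfold Tree.freqPoint; positivity)]
  have hQP : ∀ P ∈ T.elems.filter (fun P => P.timeI ⊆ dyadicI j m ∧ P.j < j),
      Q.freqI ⊆ P.upper.freqI ∧ P.timeI ⊆ Q.timeI := by
    intro P hP
    rw [Finset.mem_filter] at hP
    have hξP := hT.freqPoint_mem hP.1
    rw [Tile.freqI_eq] at hξP ⊢
    exact ⟨Q.freqI_eq ▸ dyadicI_subset_of_mem (show 1 - j ≤ -P.j by omega) hξ hξP, hQt ▸ hP.2.1⟩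
  refine ⟨⟨Q, _, fun P hP => ?_⟩, rfl, hQt, fun P hP => ?_⟩
  · exact Bitile.below_of_subset (hQP P hP).2 ((hQP P hP).1.trans P.upper_freqI_subset)
  · exact Tile.below_of_subset (hQP P hP).2 (Q.upper_freqI_subset.trans (hQP P hP).1)

def Bitile.sqTerm (f : ℝ → ℝ) (P : Bitile) (x : ℝ) : ℝ :=
  (pinner f P.lower) ^ 2 * Set.indicator P.timeI (fun _ => (1:ℝ)) x / P.len

lemma Bitile.sqTerm_of_mem (f : ℝ → ℝ) {P : Bitile} {x : ℝ} (hx : x ∈ P.timeI) :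
    P.sqTerm f x = (pinner f P.lower) ^ 2 / P.len := by
  simp [Bitile.sqTerm, indicator_of_mem hx]

lemma Bitile.sqTerm_of_notMem (f : ℝ → ℝ) {P : Bitile} {x : ℝ} (hx : x ∉ P.timeI) :
    P.sqTerm f x = 0 := by
  simp [Bitile.sqTerm, indicator_of_notMem hx]

lemma Bitile.sqTerm_nonneg (f : ℝ → ℝ) (P : Bitile) (x : ℝ) : 0 ≤ P.sqTerm f x := by
  unfold Bitile.sqTerm Bitile.len
  have : (0:ℝ) ≤ Set.indicator P.timeI (fun _ => (1:ℝ)) x := indicator_nonneg (by simp) x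
  positivity

lemma Bitile.sqTerm_le (f : ℝ → ℝ) (P : Bitile) (x : ℝ) :
    P.sqTerm f x ≤ (pinner f P.lower) ^ 2 / P.len := by
  by_cases hx : x ∈ P.timeI
  · rw [P.sqTerm_of_mem f hx]
  · rw [P.sqTerm_of_notMem f hx]
    unfold Bitile.len
    positivity

lemma Bitile.sqTerm_le_of_not_subset (f : ℝ → ℝ) {P : Bitile} {j m : ℤ} {x y : ℝ}
    (hx : x ∈ dyadicI j m) (hy : y ∈ dyadicI (j + 1) (m / 2)) (hP : ¬ P.timeI ⊆ dyadicI j m) :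
    P.sqTerm f x ≤ P.sqTerm f y := by
  by_cases hxP : x ∈ P.timeI
  · rw [P.timeI_eq] at hxP hP
    have hj : j < P.j := lt_of_not_ge fun h => hP (dyadicI_subset_of_mem h hxP hx)
    have hyP : y ∈ P.timeI := P.timeI_eq ▸ dyadicI_parent_subset_of_lt hj hx hxP hy
    rw [P.sqTerm_of_mem f hyP, P.sqTerm_of_mem f (P.timeI_eq ▸ hxP)]
  · rw [P.sqTerm_of_notMem f hxP]
    exact P.sqTerm_nonneg f y

lemma treeSq_nonneg (f : ℝ → ℝ) (T : Tree) (x : ℝ) : 0 ≤ treeSq f T x :=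
  Real.sqrt_nonneg _

lemma treeSq_sq (f : ℝ → ℝ) (T : Tree) (x : ℝ) :
    treeSq f T x ^ 2 = ∑ P ∈ T.elems, P.sqTerm f x :=
  Real.sq_sqrt (Finset.sum_nonneg fun P _ => P.sqTerm_nonneg f x)

lemma measurable_treeSq (f : ℝ → ℝ) (T : Tree) : Measurable (treeSq f T) :=
  Real.continuous_sqrt.measurable.comp <| Finset.measurable_sum _ fun _ _ =>
    ((measurable_const.indicator measurableSet_Ico).const_mul _).div_const _

lemma treeSq_eq_zero_of_notMem (f : ℝ → ℝ) {T : Tree} {x : ℝ} (hx : x ∉ T.top.timeI) :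
    treeSq f T x = 0 := by
  rw [treeSq, Finset.sum_eq_zero fun P hP =>
    P.sqTerm_of_notMem f fun hxP => hx ((T.below_top P hP).2 hxP), Real.sqrt_zero]

lemma support_treeSq_subset (f : ℝ → ℝ) (T : Tree) :
    Function.support (treeSq f T) ⊆ T.top.timeI :=
  fun _ hx => by_contra fun h => hx (treeSq_eq_zero_of_notMem f h)

lemma setOf_lt_treeSq_subset (f : ℝ → ℝ) (T : Tree) {t : ℝ} (ht : 0 ≤ t) :
    {y | t < treeSq f T y} ⊆ T.top.timeI :=
  fun _ hy => support_treeSq_subset f T (ht.trans_lt hy).ne'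

lemma treeSq_toTree (f : ℝ → ℝ) {P : Bitile} {x : ℝ} (hx : x ∈ P.timeI) :
    treeSq f P.toTree x = √((pinner f P.lower) ^ 2 / P.len) := by
  simp [treeSq, Bitile.toTree, ← P.sqTerm_of_mem f hx, Bitile.sqTerm]

lemma treeSq_eq_of_mem_dyadicI (f : ℝ → ℝ) {T : Tree} {j m : ℤ} (hj : ∀ P ∈ T.elems, j ≤ P.j)
    {x y : ℝ} (hx : x ∈ dyadicI j m) (hy : y ∈ dyadicI j m) : treeSq f T x = treeSq f T y := by
  have hmem : ∀ P ∈ T.elems, x ∈ P.timeI → y ∈ P.timeI := fun P hP hxP => by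
    rw [Bitile.timeI_eq] at hxP ⊢
    exact dyadicI_subset_of_mem (hj P hP) hx hxP hy
  have hmem' : ∀ P ∈ T.elems, y ∈ P.timeI → x ∈ P.timeI := fun P hP hyP => by
    rw [Bitile.timeI_eq] at hyP ⊢
    exact dyadicI_subset_of_mem (hj P hP) hy hyP hx
  refine congrArg Real.sqrt (Finset.sum_congr rfl fun P hP => (?_ : P.sqTerm f x = P.sqTerm f y))
  by_cases hxP : x ∈ P.timeI
  · rw [P.sqTerm_of_mem f hxP, P.sqTerm_of_mem f (hmem P hP hxP)]
  · rw [P.sqTerm_of_notMem f hxP, P.sqTerm_of_notMem f fun h => hxP (hmem' P hP h)]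

/-- `S_T f` is constant on dyadic intervals finer than every bitile of `T`. -/
lemma biUnion_maximalDyadic_setOf_lt_treeSq (f : ℝ → ℝ) (T : Tree) {t : ℝ} (ht : 0 ≤ t) :
    ⋃ q ∈ maximalDyadic {y | t < treeSq f T y}, dyadicI q.1 q.2 = {y | t < treeSq f T y} := by
  refine (iUnion₂_subset fun q hq => hq.1).antisymm fun x hx => ?_
  obtain ⟨j, hj⟩ := (T.elems.image Bitile.j).bddBelow
  have hx' : x ∈ dyadicI j ⌊(2:ℝ) ^ (-j) * x⌋ := mem_dyadicI.2 rfl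
  have hsub : dyadicI j ⌊(2:ℝ) ^ (-j) * x⌋ ⊆ {y | t < treeSq f T y} := fun y hy => by
    rw [mem_ofPred_eq, ← treeSq_eq_of_mem_dyadicI f
      (fun P hP => hj (Finset.mem_coe.2 (Finset.mem_image_of_mem _ hP))) hx' hy]
    exact hx
  obtain ⟨q, hq, hxq⟩ := exists_mem_maximalDyadic
    ((setOf_lt_treeSq_subset f T ht).trans T.top.timeI_eq.subset) hx' hsub
  exact mem_biUnion hq hxq

/-- Split `T` into the bitiles with `I_P ⊄ J`, which contribute more at `y` than at `x`, those
with `I_P = J`, of which there is at most one since `T` is 2-overlapping, and those with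
`I_P ⊊ J`. -/
lemma Tree.TwoOverlapping.treeSq_sq_le {T : Tree} (hT : T.TwoOverlapping) {f : ℝ → ℝ} {β : ℝ}
    (hβ : ∀ P ∈ T.elems, (pinner f P.lower) ^ 2 / P.len ≤ β ^ 2) {j m : ℤ} {x y : ℝ}
    (hx : x ∈ dyadicI j m) (hy : y ∈ dyadicI (j + 1) (m / 2)) :
    treeSq f T x ^ 2 ≤ treeSq f T y ^ 2 + β ^ 2 +
      ∑ P ∈ T.elems.filter (fun P => P.timeI ⊆ dyadicI j m ∧ P.j < j), P.sqTerm f x := by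
  set inJ := T.elems.filter fun P => P.timeI ⊆ dyadicI j m
  set onJ := inJ.filter fun P => ¬ P.j < j
  have honJ : onJ ⊆ T.elems := (Finset.filter_subset _ _).trans (Finset.filter_subset _ _)
  have hout : ∑ P ∈ T.elems.filter (fun P => ¬ P.timeI ⊆ dyadicI j m), P.sqTerm f x ≤
      treeSq f T y ^ 2 := by
    rw [treeSq_sq]
    exact (Finset.sum_le_sum fun P hP =>
      P.sqTerm_le_of_not_subset f hx hy (Finset.mem_filter.1 hP).2).trans
      (Finset.sum_le_sum_of_subset_of_nonneg (Finset.filter_subset _ _)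
        fun P _ _ => P.sqTerm_nonneg f y)
  have htimeI : ∀ P ∈ onJ, P.timeI = dyadicI j m := by
    intro P hP
    simp only [onJ, inJ, Finset.mem_filter, not_lt] at hP
    rw [P.timeI_eq] at hP ⊢
    exact dyadicI_eq_of_subset hP.1.2 hP.2
  have hcard : onJ.card ≤ 1 :=
    Finset.card_le_one.2 fun P hP P' hP' => hT.eq_of_timeI_eq (honJ hP) (honJ hP')
      ((htimeI P hP).trans (htimeI P' hP').symm)
  have hJ : ∑ P ∈ onJ, P.sqTerm f x ≤ β ^ 2 :=
    calc ∑ P ∈ onJ, P.sqTerm f x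
        ≤ onJ.card • β ^ 2 :=
          Finset.sum_le_card_nsmul _ _ _ fun P hP => (P.sqTerm_le f x).trans (hβ P (honJ hP))
      _ ≤ 1 • β ^ 2 := nsmul_le_nsmul_left (sq_nonneg β) hcard
      _ = β ^ 2 := one_nsmul _
  rw [treeSq_sq, ← Finset.sum_filter_add_sum_filter_not T.elems
    (fun P => P.timeI ⊆ dyadicI j m), ← Finset.sum_filter_add_sum_filter_not inJ
    (fun P => P.j < j), Finset.filter_filter]
  linarith

lemma le_wkNorm (g : ℝ → ℝ) (μ : Measure ℝ) (t : ℝ) :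
    ENNReal.ofReal t * μ {x | t < |g x|} ≤ wkNorm g μ :=
  le_iSup (fun t => ENNReal.ofReal t * μ {x | t < |g x|}) t

lemma ae_eq_zero_of_wkNorm_eq_zero {g : ℝ → ℝ} {μ : Measure ℝ} (h : wkNorm g μ = 0) :
    g =ᵐ[μ] 0 := by
  have hnull : ∀ n : ℕ, μ {x | 1 / ((n:ℝ) + 1) < |g x|} = 0 := fun n => by
    have := (le_wkNorm g μ (1 / ((n:ℝ) + 1))).trans_eq h
    simpa [Nat.cast_add_one_pos n] using this
  refine measure_mono_null (fun x (hx : g x ≠ 0) => ?_) (measure_iUnion_null hnull)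
  obtain ⟨n, hn⟩ := exists_nat_one_div_lt (abs_pos.2 hx)
  exact mem_iUnion.2 ⟨n, hn⟩

lemma wkNorm_le_eLpNorm_one {g : ℝ → ℝ} {μ : Measure ℝ} (hg : AEStronglyMeasurable g μ) :
    wkNorm g μ ≤ eLpNorm g 1 μ := by
  refine iSup_le fun t => ?_
  have hmarkov := mul_meas_ge_le_pow_eLpNorm' μ one_ne_zero ENNReal.one_ne_top hg
    (ENNReal.ofReal t)
  simp only [ENNReal.toReal_one, ENNReal.rpow_one] at hmarkov
  refine le_trans (mul_le_mul_right (measure_mono fun x (hx : t < |g x|) => ?_) _) hmarkov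
  rw [mem_ofPred_eq, Real.enorm_eq_ofReal_abs]
  exact ENNReal.ofReal_le_ofReal hx.le

lemma wkNorm_le_eLpNorm_mul {g : ℝ → ℝ} {μ : Measure ℝ} (hg : AEStronglyMeasurable g μ)
    {s : Set ℝ} (hgs : Function.support g ⊆ s) {p : ℝ} (hp : 1 ≤ p) :
    wkNorm g μ ≤ eLpNorm g (ENNReal.ofReal p) μ * μ s ^ (1 - 1 / p) := by
  calc wkNorm g μ ≤ eLpNorm g 1 μ := wkNorm_le_eLpNorm_one hg
    _ = eLpNorm g 1 (μ.restrict s) := (eLpNorm_restrict_eq_of_support_subset hgs).symm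
    _ ≤ eLpNorm g (ENNReal.ofReal p) (μ.restrict s) * μ.restrict s univ ^ (1 / 1 - 1 / p) := by
        simpa [ENNReal.toReal_ofReal (zero_le_one.trans hp)] using
          eLpNorm_le_eLpNorm_mul_rpow_measure_univ (ENNReal.one_le_ofReal.2 hp) hg.restrict
    _ = eLpNorm g (ENNReal.ofReal p) μ * μ s ^ (1 - 1 / p) := by
        rw [eLpNorm_restrict_eq_of_support_subset hgs, Measure.restrict_apply_univ, div_one]

lemma wkNorm_div_le_eLpNorm_div {g : ℝ → ℝ} {μ : Measure ℝ} (hg : AEStronglyMeasurable g μ)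
    {s : Set ℝ} (hgs : Function.support g ⊆ s) (hs₀ : μ s ≠ 0) (hs : μ s ≠ ⊤) {p : ℝ}
    (hp : 1 ≤ p) :
    wkNorm g μ / μ s ≤ eLpNorm g (ENNReal.ofReal p) μ / μ s ^ (1 / p) := by
  have hexp : μ s ^ (1 - 1 / p) * (μ s)⁻¹ = (μ s ^ (1 / p))⁻¹ := by
    rw [← ENNReal.rpow_neg_one, ← ENNReal.rpow_add _ _ hs₀ hs, ← ENNReal.rpow_neg]
    ring_nf
  calc wkNorm g μ / μ s ≤ eLpNorm g (ENNReal.ofReal p) μ * μ s ^ (1 - 1 / p) / μ s :=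
        ENNReal.div_le_div_right (wkNorm_le_eLpNorm_mul hg hgs hp) _
    _ = eLpNorm g (ENNReal.ofReal p) μ / μ s ^ (1 / p) := by
        rw [div_eq_mul_inv, mul_assoc, hexp, ← div_eq_mul_inv]

lemma measure_lt_abs_le_half_of_wkNorm_le {g : ℝ → ℝ} {μ : Measure ℝ} {β : ℝ} (hβ : 0 < β)
    {c : ℝ≥0∞} (h : wkNorm g μ ≤ ENNReal.ofReal β * c) : μ {x | 2 * β < |g x|} ≤ c / 2 := by
  have h2 : ENNReal.ofReal β * (2 * μ {x | 2 * β < |g x|}) ≤ ENNReal.ofReal β * c := by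
    calc ENNReal.ofReal β * (2 * μ {x | 2 * β < |g x|})
        = ENNReal.ofReal (2 * β) * μ {x | 2 * β < |g x|} := by
          rw [ENNReal.ofReal_mul zero_le_two, ENNReal.ofReal_ofNat, mul_left_comm, mul_assoc]
      _ ≤ ENNReal.ofReal β * c := (le_wkNorm g μ _).trans h
  rw [ENNReal.le_div_iff_mul_le (by simp) (by simp), mul_comm]
  exact (ENNReal.mul_le_mul_iff_right (by simpa using hβ) ENNReal.ofReal_ne_top).1 h2

/-- A discrete layer-cake bound: `g ^ p ≤ (a (k + 1)) ^ p` on `{a k < g ≤ a (k + 1)}`. -/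
lemma lintegral_rpow_le_tsum_measure_lt {α : Type*} [MeasurableSpace α] (μ : Measure α)
    {g : α → ℝ} (hg : Measurable g)
    {a p : ℝ} (ha : 0 < a) (hp : 0 < p) :
    ∫⁻ x, ENNReal.ofReal (g x) ^ p ∂μ ≤
      ∑' k : ℕ, ENNReal.ofReal ((a * (k + 1)) ^ p) * μ {x | a * k < g x} := by
  have hpt : ∀ x, ENNReal.ofReal (g x) ^ p ≤
      ∑' k : ℕ, {x | a * k < g x}.indicator (fun _ => ENNReal.ofReal ((a * (k + 1)) ^ p)) x := by
    intro x
    rcases le_or_gt (g x) 0 with hx | hx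
    · simp [ENNReal.ofReal_eq_zero.2 hx, ENNReal.zero_rpow_of_pos hp]
    set n := ⌈g x / a⌉₊
    have hn : 0 < n := Nat.ceil_pos.2 (by positivity)
    have hlow : ((n - 1 : ℕ) : ℝ) < g x / a := by
      rw [Nat.cast_pred hn]
      linarith [Nat.ceil_lt_add_one (div_nonneg hx.le ha.le)]
    have hup : g x / a ≤ ((n - 1 : ℕ) : ℝ) + 1 := by
      rw [Nat.cast_pred hn, sub_add_cancel]
      exact Nat.le_ceil _
    refine le_trans ?_ (ENNReal.le_tsum (n - 1))
    rw [indicator_of_mem (show x ∈ {x | a * ((n - 1 : ℕ) : ℝ) < g x} by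
      rwa [lt_div_iff₀ ha, mul_comm] at hlow), ENNReal.ofReal_rpow_of_nonneg hx.le hp.le]
    exact ENNReal.ofReal_le_ofReal (Real.rpow_le_rpow hx.le
      (by rwa [div_le_iff₀ ha, mul_comm] at hup) hp.le)
  calc ∫⁻ x, ENNReal.ofReal (g x) ^ p ∂μ
      ≤ ∫⁻ x, ∑' k : ℕ,
          {x | a * k < g x}.indicator (fun _ => ENNReal.ofReal ((a * (k + 1)) ^ p)) x ∂μ :=
        lintegral_mono hpt
    _ = ∑' k : ℕ, ENNReal.ofReal ((a * (k + 1)) ^ p) * μ {x | a * k < g x} := by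
        rw [lintegral_tsum fun k => (measurable_const.indicator
          (measurableSet_lt measurable_const hg)).aemeasurable]
        exact tsum_congr fun k => lintegral_indicator_const
          (measurableSet_lt measurable_const hg) _

lemma summable_rpow_mul_geometric (p : ℝ) :
    Summable fun k : ℕ => ((k:ℝ) + 1) ^ p * (2⁻¹:ℝ) ^ k := by
  have hnat : Summable fun k : ℕ => (((k + 1 : ℕ) : ℝ) ^ ⌈p⌉₊ * (2⁻¹:ℝ) ^ (k + 1)) :=
    (summable_nat_add_iff (f := fun k : ℕ => (k:ℝ) ^ ⌈p⌉₊ * (2⁻¹:ℝ) ^ k) 1).2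
      (summable_pow_mul_geometric_of_norm_lt_one _ (by norm_num))
  refine Summable.of_nonneg_of_le (fun k => by positivity) (fun k => ?_) (hnat.mul_left 2)
  calc ((k:ℝ) + 1) ^ p * (2⁻¹:ℝ) ^ k ≤ ((k:ℝ) + 1) ^ (⌈p⌉₊ : ℝ) * (2⁻¹:ℝ) ^ k :=
        mul_le_mul_of_nonneg_right (Real.rpow_le_rpow_of_exponent_le (by simp) (Nat.le_ceil p))
          (by positivity)
    _ = 2 * (((k + 1 : ℕ) : ℝ) ^ ⌈p⌉₊ * (2⁻¹:ℝ) ^ (k + 1)) := by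
        rw [Real.rpow_natCast, pow_succ]
        push_cast
        ring

def jnConst (p : ℝ) : ℝ := ∑' k : ℕ, ((k:ℝ) + 1) ^ p * (2⁻¹:ℝ) ^ k

lemma jnConst_pos (p : ℝ) : 0 < jnConst p :=
  (summable_rpow_mul_geometric p).tsum_pos (fun k => by positivity) 0 (by norm_num)

lemma ofReal_jnConst (p : ℝ) :
    ENNReal.ofReal (jnConst p) = ∑' k : ℕ, ENNReal.ofReal (((k:ℝ) + 1) ^ p) * 2⁻¹ ^ k := by
  rw [jnConst, ENNReal.ofReal_tsum_of_nonneg (fun k => by positivity)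
    (summable_rpow_mul_geometric p)]
  refine tsum_congr fun k => ?_
  rw [ENNReal.ofReal_mul (by positivity), ENNReal.ofReal_pow (by norm_num),
    ENNReal.ofReal_inv_of_pos two_pos, ENNReal.ofReal_ofNat]

def WeakTreeBound (μ : Measure ℝ) (f : ℝ → ℝ) (Ps : Set Bitile) (β : ℝ) : Prop :=
  ∀ T : Tree, (T.elems : Set Bitile) ⊆ Ps → T.TwoOverlapping →
    wkNorm (treeSq f T) μ ≤ ENNReal.ofReal β * μ T.top.timeI

namespace WeakTreeBound

variable {μ : Measure ℝ} {f : ℝ → ℝ} {Ps : Set Bitile} {β : ℝ}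

lemma sq_pinner_div_len_le (H : WeakTreeBound μ f Ps β) (hβ : 0 ≤ β) {P : Bitile} (hP : P ∈ Ps)
    (h₀ : μ P.timeI ≠ 0) (h : μ P.timeI ≠ ⊤) : (pinner f P.lower) ^ 2 / P.len ≤ β ^ 2 := by
  set v := √((pinner f P.lower) ^ 2 / P.len)
  have hv : v ≤ β := le_of_forall_lt_imp_le_of_dense fun t ht => by
    have hsub : P.timeI ⊆ {x | t < |treeSq f P.toTree x|} := fun x hx => by
      rwa [mem_ofPred_eq, treeSq_toTree f hx, abs_of_nonneg (Real.sqrt_nonneg _)]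
    have hle : ENNReal.ofReal t * μ P.timeI ≤ ENNReal.ofReal β * μ P.timeI :=
      (mul_le_mul_right (measure_mono hsub) _).trans
        ((le_wkNorm _ μ t).trans (H P.toTree (by simpa [Bitile.toTree] using hP)
          P.toTree_twoOverlapping))
    exact (ENNReal.ofReal_le_ofReal_iff hβ).1 ((ENNReal.mul_le_mul_iff_left h₀ h).1 hle)
  have hsq := pow_le_pow_left₀ (Real.sqrt_nonneg _) hv 2
  rwa [Real.sq_sqrt (by unfold Bitile.len; positivity)] at hsq

lemma measure_inter_maximalDyadic_le (H : WeakTreeBound μ f Ps β)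
    (hPs : ∀ P ∈ Ps, (pinner f P.lower) ^ 2 / P.len ≤ β ^ 2) (hβ : 0 < β) {T : Tree}
    (hTPs : (T.elems : Set Bitile) ⊆ Ps) (hT : T.TwoOverlapping) {t : ℝ} (ht : 0 ≤ t)
    {q : ℤ × ℤ} (hq : q ∈ maximalDyadic {y | t < treeSq f T y}) :
    μ ({y | t + 3 * β < treeSq f T y} ∩ dyadicI q.1 q.2) ≤ μ (dyadicI q.1 q.2) / 2 := by
  obtain ⟨j, m⟩ := q
  obtain ⟨hJ, hpar⟩ := hq
  obtain ⟨y, hy, hyt⟩ := not_subset.1 hpar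
  obtain ⟨x₀, hx₀⟩ := dyadicI_nonempty j m
  have hm : 0 ≤ m := index_nonneg_of_mem_dyadicI hx₀
    (Bitile.nonneg_of_mem_timeI (setOf_lt_treeSq_subset f T ht (hJ hx₀)))
  lift m to ℕ using hm
  obtain ⟨T', hT'e, hT't, hT'o⟩ := hT.exists_subtree j m
  have hT'Ps : (T'.elems : Set Bitile) ⊆ Ps := by
    rw [hT'e, Finset.coe_filter]
    exact fun P hP => hTPs hP.1
  have hsub : {y | t + 3 * β < treeSq f T y} ∩ dyadicI j m ⊆
      {z | 2 * β < |treeSq f T' z|} := by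
    rintro x ⟨hxt : t + 3 * β < treeSq f T x, hxJ⟩
    have hloc := hT.treeSq_sq_le (fun P hP => hPs P (hTPs hP)) hxJ hy
    rw [← hT'e, ← treeSq_sq] at hloc
    have hyt' : treeSq f T y ≤ t := not_lt.1 hyt
    have hy₀ := treeSq_nonneg f T y
    have hx₀ := treeSq_nonneg f T' x
    rw [mem_ofPred_eq, abs_of_nonneg hx₀]
    nlinarith
  exact (measure_mono hsub).trans
    (measure_lt_abs_le_half_of_wkNorm_le hβ (hT't ▸ H T' hT'Ps hT'o))

lemma measure_lt_treeSq_add_le_half (H : WeakTreeBound μ f Ps β)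
    (hPs : ∀ P ∈ Ps, (pinner f P.lower) ^ 2 / P.len ≤ β ^ 2) (hβ : 0 < β) {T : Tree}
    (hTPs : (T.elems : Set Bitile) ⊆ Ps) (hT : T.TwoOverlapping) {t : ℝ} (ht : 0 ≤ t) :
    μ {y | t + 3 * β < treeSq f T y} ≤ μ {y | t < treeSq f T y} / 2 :=
  measure_le_half_of_maximalDyadic μ (biUnion_maximalDyadic_setOf_lt_treeSq f T ht)
    (measurableSet_lt measurable_const (measurable_treeSq f T))
    (fun y (hy : t + 3 * β < treeSq f T y) => show t < treeSq f T y by linarith)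
    fun _ hq => H.measure_inter_maximalDyadic_le hPs hβ hTPs hT ht hq

lemma measure_lt_treeSq_le (H : WeakTreeBound μ f Ps β)
    (hPs : ∀ P ∈ Ps, (pinner f P.lower) ^ 2 / P.len ≤ β ^ 2) (hβ : 0 < β) {T : Tree}
    (hTPs : (T.elems : Set Bitile) ⊆ Ps) (hT : T.TwoOverlapping) (k : ℕ) :
    μ {y | 3 * β * k < treeSq f T y} ≤ μ T.top.timeI * 2⁻¹ ^ k := by
  induction k with
  | zero => simpa using measure_mono (setOf_lt_treeSq_subset f T le_rfl)
  | succ k ih =>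
    calc μ {y | 3 * β * ↑(k + 1) < treeSq f T y}
        = μ {y | 3 * β * k + 3 * β < treeSq f T y} := by push_cast; ring_nf
      _ ≤ μ {y | 3 * β * k < treeSq f T y} / 2 :=
        H.measure_lt_treeSq_add_le_half hPs hβ hTPs hT (by positivity)
      _ ≤ μ T.top.timeI * 2⁻¹ ^ k / 2 := by gcongr
      _ = μ T.top.timeI * 2⁻¹ ^ (k + 1) := by rw [pow_succ, div_eq_mul_inv, mul_assoc]

lemma lintegral_treeSq_rpow_le (H : WeakTreeBound μ f Ps β)
    (hPs : ∀ P ∈ Ps, (pinner f P.lower) ^ 2 / P.len ≤ β ^ 2) (hβ : 0 < β) {T : Tree}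
    (hTPs : (T.elems : Set Bitile) ⊆ Ps) (hT : T.TwoOverlapping) {p : ℝ} (hp : 0 < p) :
    ∫⁻ x, ENNReal.ofReal (treeSq f T x) ^ p ∂μ ≤
      ENNReal.ofReal ((3 * β) ^ p * jnConst p) * μ T.top.timeI := by
  have h3β : 0 < 3 * β := by positivity
  calc ∫⁻ x, ENNReal.ofReal (treeSq f T x) ^ p ∂μ
      ≤ ∑' k : ℕ, ENNReal.ofReal ((3 * β * (k + 1)) ^ p) * μ {x | 3 * β * k < treeSq f T x} :=
        lintegral_rpow_le_tsum_measure_lt μ (measurable_treeSq f T) h3β hp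
    _ ≤ ∑' k : ℕ, ENNReal.ofReal ((3 * β * (k + 1)) ^ p) * (μ T.top.timeI * 2⁻¹ ^ k) :=
        ENNReal.tsum_le_tsum fun k => by gcongr; exact H.measure_lt_treeSq_le hPs hβ hTPs hT k
    _ = ENNReal.ofReal ((3 * β) ^ p * jnConst p) * μ T.top.timeI := by
        rw [ENNReal.ofReal_mul (by positivity), ofReal_jnConst, ← ENNReal.tsum_mul_left,
          ← ENNReal.tsum_mul_right]
        refine tsum_congr fun k => ?_
        rw [Real.mul_rpow h3β.le (by positivity), ENNReal.ofReal_mul (by positivity)]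
        ring

lemma eLpNorm_treeSq_le (H : WeakTreeBound μ f Ps β) [IsLocallyFiniteMeasure μ]
    (hμ : volume ≪ μ) (hβ : 0 ≤ β) {T : Tree} (hTPs : (T.elems : Set Bitile) ⊆ Ps)
    (hT : T.TwoOverlapping) {p : ℝ} (hp : 0 < p) :
    eLpNorm (treeSq f T) (ENNReal.ofReal p) μ ≤
      ENNReal.ofReal (3 * jnConst p ^ (1 / p) * β) * μ T.top.timeI ^ (1 / p) := by
  rcases hβ.eq_or_lt with rfl | hβ
  · have hwk : wkNorm (treeSq f T) μ = 0 := by simpa using H T hTPs hT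
    simp [eLpNorm_congr_ae (ae_eq_zero_of_wkNorm_eq_zero hwk)]
  have hPs : ∀ P ∈ Ps, (pinner f P.lower) ^ 2 / P.len ≤ β ^ 2 := fun P hP =>
    H.sq_pinner_div_len_le hβ.le hP (P.measure_timeI_ne_zero hμ) P.measure_timeI_ne_top
  rw [eLpNorm_eq_lintegral_rpow_enorm_toReal (by simpa using hp) ENNReal.ofReal_ne_top,
    ENNReal.toReal_ofReal hp.le]
  simp_rw [Real.enorm_of_nonneg (treeSq_nonneg f T _)]
  calc (∫⁻ x, ENNReal.ofReal (treeSq f T x) ^ p ∂μ) ^ (1 / p)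
      ≤ (ENNReal.ofReal ((3 * β) ^ p * jnConst p) * μ T.top.timeI) ^ (1 / p) := by
        gcongr
        exact H.lintegral_treeSq_rpow_le hPs hβ hTPs hT hp
    _ = ENNReal.ofReal (3 * jnConst p ^ (1 / p) * β) * μ T.top.timeI ^ (1 / p) := by
        rw [ENNReal.mul_rpow_of_nonneg _ _ (by positivity), ENNReal.ofReal_rpow_of_nonneg
          (by positivity [jnConst_pos p]) (by positivity), Real.mul_rpow (by positivity)
          (jnConst_pos p).le, ← Real.rpow_mul (by positivity), mul_one_div_cancel hp.ne',
          Real.rpow_one]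
        ring_nf

lemma eLpNorm_treeSq_div_le (H : WeakTreeBound μ f Ps β) [IsLocallyFiniteMeasure μ]
    (hμ : volume ≪ μ) (hβ : 0 ≤ β) {T : Tree} (hTPs : (T.elems : Set Bitile) ⊆ Ps)
    (hT : T.TwoOverlapping) {p : ℝ} (hp : 0 < p) :
    eLpNorm (treeSq f T) (ENNReal.ofReal p) μ / μ T.top.timeI ^ (1 / p) ≤
      ENNReal.ofReal (3 * jnConst p ^ (1 / p)) * ENNReal.ofReal β := by
  have h₀ := T.top.measure_timeI_ne_zero hμ
  have h := T.top.measure_timeI_ne_top (μ := μ)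
  rw [ENNReal.div_le_iff_le_mul (Or.inl (ENNReal.rpow_pos (pos_iff_ne_zero.2 h₀) h).ne')
    (Or.inl (ENNReal.rpow_ne_top_of_nonneg (by positivity) h)), ← ENNReal.ofReal_mul
    (by positivity [jnConst_pos p])]
  exact H.eLpNorm_treeSq_le hμ hβ hTPs hT hp

end WeakTreeBound

lemma weakTreeBound_toReal_iSup {μ : Measure ℝ} [IsLocallyFiniteMeasure μ] (hμ : volume ≪ μ)
    (f : ℝ → ℝ) (Ps : Set Bitile)
    (h : (⨆ (T : Tree) (_ : (T.elems : Set Bitile) ⊆ Ps ∧ T.TwoOverlapping),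
      wkNorm (treeSq f T) μ / μ T.top.timeI) ≠ ⊤) :
    WeakTreeBound μ f Ps (⨆ (T : Tree) (_ : (T.elems : Set Bitile) ⊆ Ps ∧ T.TwoOverlapping),
      wkNorm (treeSq f T) μ / μ T.top.timeI).toReal := fun T hTPs hT => by
  rw [ENNReal.ofReal_toReal h, ← ENNReal.div_le_iff_le_mul
    (Or.inl (T.top.measure_timeI_ne_zero hμ)) (Or.inl T.top.measure_timeI_ne_top)]
  exact le_iSup₂ (f := fun (T : Tree) (_ : (T.elems : Set Bitile) ⊆ Ps ∧ T.TwoOverlapping) =>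
    wkNorm (treeSq f T) μ / μ T.top.timeI) T ⟨hTPs, hT⟩

lemma isLocallyFiniteMeasure_wMeasure {w : ℝ → ℝ} (hw : LocallyIntegrable w volume) :
    IsLocallyFiniteMeasure (wMeasure w) :=
  ⟨fun x => by
    obtain ⟨U, hU, hint⟩ := hw x
    exact ⟨U, hU, by rw [wMeasure, withDensity_apply' _ U]; exact hint.lintegral_lt_top⟩⟩

lemma IsWeight.volume_absolutelyContinuous {w : ℝ → ℝ} (hw : IsWeight w) :
    volume ≪ wMeasure w :=
  withDensity_absolutelyContinuous' hw.2.aestronglyMeasurable.aemeasurable.ennreal_ofReal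
    (hw.1.mono fun _ hx => by simpa using hx)

/-- Lemma 4.2, BMO characterization of size: the quantities
`sup_T w(I_T)^{-1/p} ‖S_T f‖_{L^p(w)}` and `sup_T w(I_T)^{-1} ‖S_T f‖_{L^{1,∞}(w)}`
over 2-overlapping trees `T ⊆ Ps` are comparable with constants depending only on `p`. -/
theorem size_BMO_characterization (p : ℝ) (hp : 1 < p) :
    ∃ c C : ℝ, 0 < c ∧ 0 < C ∧
    ∀ w : ℝ → ℝ, IsWeight w → ∀ f : ℝ → ℝ, ∀ Ps : Set Bitile,
      (ENNReal.ofReal c *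
        (⨆ (T : Tree) (_ : (T.elems : Set Bitile) ⊆ Ps ∧ T.TwoOverlapping),
          wkNorm (treeSq f T) (wMeasure w) / wMeasure w T.top.timeI) ≤
        ⨆ (T : Tree) (_ : (T.elems : Set Bitile) ⊆ Ps ∧ T.TwoOverlapping),
          eLpNorm (treeSq f T) (ENNReal.ofReal p) (wMeasure w) /
            (wMeasure w T.top.timeI) ^ (1/p)) ∧
      ((⨆ (T : Tree) (_ : (T.elems : Set Bitile) ⊆ Ps ∧ T.TwoOverlapping),
          eLpNorm (treeSq f T) (ENNReal.ofReal p) (wMeasure w) /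
            (wMeasure w T.top.timeI) ^ (1/p)) ≤
        ENNReal.ofReal C *
        ⨆ (T : Tree) (_ : (T.elems : Set Bitile) ⊆ Ps ∧ T.TwoOverlapping),
          wkNorm (treeSq f T) (wMeasure w) / wMeasure w T.top.timeI) := by
  have hC : 0 < 3 * jnConst p ^ (1 / p) := by positivity [jnConst_pos p]
  refine ⟨1, _, one_pos, hC, fun w hw f Ps => ?_⟩
  have := isLocallyFiniteMeasure_wMeasure hw.2
  have hμ := hw.volume_absolutelyContinuous
  refine ⟨?_, ?_⟩
  · rw [ENNReal.ofReal_one, one_mul]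
    exact iSup₂_mono fun T _ => wkNorm_div_le_eLpNorm_div
      (measurable_treeSq f T).aestronglyMeasurable (support_treeSq_subset f T)
      (T.top.measure_timeI_ne_zero hμ) T.top.measure_timeI_ne_top hp.le
  · set B := ⨆ (T : Tree) (_ : (T.elems : Set Bitile) ⊆ Ps ∧ T.TwoOverlapping),
      wkNorm (treeSq f T) (wMeasure w) / wMeasure w T.top.timeI
    rcases eq_top_or_lt_top B with hB | hB
    · rw [hB, ENNReal.mul_top (by simpa using hC)]
      exact le_top
    refine iSup₂_le fun T hT => ?_
    calc eLpNorm (treeSq f T) (ENNReal.ofReal p) (wMeasure w) / wMeasure w T.top.timeI ^ (1 / p)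
        ≤ ENNReal.ofReal (3 * jnConst p ^ (1 / p)) * ENNReal.ofReal B.toReal :=
          (weakTreeBound_toReal_iSup hμ f Ps hB.ne).eLpNorm_treeSq_div_le hμ
            ENNReal.toReal_nonneg hT.1 hT.2 (by linarith)
      _ = ENNReal.ofReal (3 * jnConst p ^ (1 / p)) * B := by rw [ENNReal.ofReal_toReal hB.ne]

end Paper
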